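/- Let M be a Turing machine and K a natural number such that for every input string s with |s| ≥ K, the running time of M on s is strictly less than |s|. Then for every input r with |r| ≥ K, the running time of M on r is strictly less than K, and M(r) equals M(s) where s is the prefix of r of length K. -/

import Mathlib

/-- Tape alphabet: 0, 1, blank, left-end marker. -/
inductive TSym : Type
  | zero | one | blank | mark
deriving DecidableEq

inductive Move : Type
  | L | S | R
deriving DecidableEq

/-- A deterministic single-tape Turing machine. -/
structure TM where
  Q : Type
  q0 : Q
  qh : Q
  δ : Q → TSym → Q × TSym × Move

structure Cfg (M : TM) where
  q : M.Q
  pos : ℕ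
  tape : ℕ → TSym

def TM.step (M : TM) (c : Cfg M) : Cfg M :=
  let r := M.δ c.q (c.tape c.pos)
  { q := r.1
    pos := match r.2.2 with
      | .L => c.pos - 1
      | .S => c.pos
      | .R => c.pos + 1
    tape := Function.update c.tape c.pos r.2.1 }

/-- Initial tape: left-end marker at square 0, input written from square 1 on. -/
def initTape (s : List Bool) : ℕ → TSym := fun n =>
  if n = 0 then TSym.mark
  else if n - 1 < s.length then (if s.getD (n - 1) false then TSym.one else TSym.zero)
  else TSym.blank

def TM.init (M : TM) (s : List Bool) : Cfg M := ⟨M.q0, 0, initTape s⟩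

def TM.cfgAt (M : TM) (s : List Bool) (n : ℕ) : Cfg M := M.step^[n] (M.init s)

def TM.HaltsIn (M : TM) (s : List Bool) (n : ℕ) : Prop := (M.cfgAt s n).q = M.qh

def TM.Halts (M : TM) (s : List Bool) : Prop := ∃ n, M.HaltsIn s n

/-- Running time: the least number of steps after which the machine is halted. -/
noncomputable def TM.time (M : TM) (s : List Bool) : ℕ := sInf {n | M.HaltsIn s n}

/-- Output: the symbol at tape square 1 upon halting. -/
noncomputable def TM.output (M : TM) (s : List Bool) : TSym :=
  (M.cfgAt s (M.time s)).tape 1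

/-- Formulas are ASCII strings. -/
abbrev Formula := List (Fin 128)
abbrev FSeq := List Formula

/-- The length of a formula sequence: the sum of lengths of its members. -/
def seqLen (π : FSeq) : ℕ := (π.map List.length).sum

/-- Justification kinds for a proof step: logical axiom, ZFC axiom, member of the
theory, modus ponens (with recorded premise indices), generalization. -/
inductive Just : Type
  | logic | zfc | axm
  | mp (j k : ℕ)
  | gen (j k : ℕ)
deriving DecidableEq

/-- Abstract data of the ambient proof calculus. -/
structure ProofSystem where
  logicAx : Formula → Bool
  zfcAx : Formula → Bool
  isMP : Formula → Formula → Formula → Bool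
  isGen : ℕ → Formula → Formula → Bool

/-- The checker for a single justified step. -/
def justOK (P : ProofSystem) (T : FSeq) (σ : FSeq) (i : ℕ) : Just → Bool
  | .logic => P.logicAx (σ.getD i [])
  | .zfc => P.zfcAx (σ.getD i [])
  | .axm => decide ((σ.getD i []) ∈ T)
  | .mp j k => decide (j < i) && decide (k < i) &&
      P.isMP (σ.getD j []) (σ.getD k []) (σ.getD i [])
  | .gen j k => decide (j < i) && P.isGen k (σ.getD j []) (σ.getD i [])

/-- The adjoint checker of a proof type `G`: accepts `(T, σ)` iff `σ` has the same
length as `G` and each step of `σ` is justified as recorded in `G`. -/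
def CK (P : ProofSystem) (G : List Just) (T σ : FSeq) : Bool :=
  decide (σ.length = G.length) &&
    (List.range G.length).all (fun i => justOK P T σ i (G.getD i Just.logic))

/-- `π` is a derivation of `φ` from the theory `T`. -/
def ProofOf (P : ProofSystem) (T : FSeq) (π : FSeq) (φ : Formula) : Prop :=
  π.getLast? = some φ ∧ ∃ G : List Just, G.length = π.length ∧ CK P G T π = true

/-- Cost of the membership check `φ ∈ T` by linear scan (algorithm AL). -/
def axmCost (T : FSeq) (φ : Formula) : ℕ := T.idxOf φ + 1

def justCost (T : FSeq) (σ : FSeq) (i : ℕ) : Just → ℕ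
  | .axm => axmCost T (σ.getD i [])
  | _ => 1

/-- Running time of the adjoint checker `CK_G` on `(T, σ)`. -/
def ckCost (T σ : FSeq) (G : List Just) : ℕ :=
  ((List.range G.length).map (fun i => justCost T σ i (G.getD i Just.logic))).sum

/-- The data needed to speak about normal proofs of `M(s) = v`:
machine description axioms `defM`, input description axioms `inputAx s`,
and the halting formula `∃ i, t_{i,1} = (v, q_halt, 1)`. -/
structure NormalSetup where
  M : TM
  P : ProofSystem
  defM : FSeq
  inputAx : List Bool → FSeq
  haltFormula : TSym → Formula

/-- The theory `T_{M,s} = def_M ++ input_s`. -/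
def NormalSetup.T (S : NormalSetup) (s : List Bool) : FSeq := S.defM ++ S.inputAx s

/-- `π` is a normal proof of `M(s) = v`. -/
def NormalSetup.NormalProof (S : NormalSetup) (s : List Bool) (v : TSym) (π : FSeq) : Prop :=
  ProofOf S.P (S.T s) π (S.haltFormula v)

/-- `FS(M, s, v)`: the minimal length of a normal proof of `M(s) = v`. -/
noncomputable def NormalSetup.FS (S : NormalSetup) (s : List Bool) (v : TSym) : ℕ :=
  sInf {k | ∃ π, S.NormalProof s v π ∧ seqLen π = k}

/-- The `C`-generated verifier: accepts `s` iff some adjoint checker in `C` accepts. -/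
def FC (S : NormalSetup) (C : List (List Just × FSeq)) (s : List Bool) : Bool :=
  C.any (fun p => CK S.P p.1 (S.T s) p.2)

lemma cfg_agree (M : TM) (r s : List Bool) (K : ℕ)
    (hinit : ∀ p, p ≤ K → initTape r p = initTape s p) :
    ∀ n, n ≤ K →
      (M.cfgAt r n).q = (M.cfgAt s n).q ∧ (M.cfgAt r n).pos = (M.cfgAt s n).pos ∧
      (M.cfgAt r n).pos ≤ n ∧ ∀ p, p ≤ K → (M.cfgAt r n).tape p = (M.cfgAt s n).tape p := by
  intro n
  induction n with
  | zero =>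
    intro _
    refine ⟨rfl, rfl, le_refl _, fun p hp => ?_⟩
    simpa [TM.cfgAt, TM.init] using hinit p hp
  | succ n ih =>
    intro hn
    obtain ⟨hq, hpos, hple, htape⟩ := ih (Nat.le_of_succ_le hn)
    have hpK : (M.cfgAt r n).pos ≤ K := le_trans hple (by omega)
    have hread : (M.cfgAt r n).tape (M.cfgAt r n).pos
        = (M.cfgAt s n).tape (M.cfgAt s n).pos := by
      rw [← hpos]; exact htape _ hpK
    have hδ : M.δ (M.cfgAt r n).q ((M.cfgAt r n).tape (M.cfgAt r n).pos)
        = M.δ (M.cfgAt s n).q ((M.cfgAt s n).tape (M.cfgAt s n).pos) := by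
      rw [hq, hread]
    have hstep : ∀ t : List Bool, M.cfgAt t (n + 1) = M.step (M.cfgAt t n) := by
      intro t; simp [TM.cfgAt, Function.iterate_succ_apply']
    rw [hstep r, hstep s]
    refine ⟨?_, ?_, ?_, ?_⟩
    · show (M.δ _ _).1 = (M.δ _ _).1
      rw [hδ]
    · show (match (M.δ _ _).2.2 with
        | Move.L => (M.cfgAt r n).pos - 1
        | Move.S => (M.cfgAt r n).pos
        | Move.R => (M.cfgAt r n).pos + 1) = _
      rw [hδ, hpos]; rfl
    · show (match (M.δ _ _).2.2 with
        | Move.L => (M.cfgAt r n).pos - 1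
        | Move.S => (M.cfgAt r n).pos
        | Move.R => (M.cfgAt r n).pos + 1) ≤ n + 1
      cases (M.δ (M.cfgAt r n).q ((M.cfgAt r n).tape (M.cfgAt r n).pos)).2.2 <;>
        simp <;> omega
    · intro p hp
      show Function.update (M.cfgAt r n).tape (M.cfgAt r n).pos (M.δ _ _).2.1 p
        = Function.update (M.cfgAt s n).tape (M.cfgAt s n).pos (M.δ _ _).2.1 p
      rw [hδ, hpos]
      by_cases hpe : p = (M.cfgAt s n).pos
      · subst hpe; simp [Function.update_self]
      · simp [Function.update_of_ne hpe, htape p hp]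

lemma initTape_take_agree (r : List Bool) (K : ℕ) (hK : K ≤ r.length) :
    ∀ p, p ≤ K → initTape r p = initTape (r.take K) p := by
  intro p hp
  unfold initTape
  by_cases h0 : p = 0
  · simp [h0]
  · have h1 : p - 1 < K := by omega
    have h2 : p - 1 < r.length := by omega
    have h3 : p - 1 < (r.take K).length := by simp; omega
    simp only [h0, if_false, h2, if_pos, h3]
    rw [List.getD_eq_getElem _ _ h2, List.getD_eq_getElem _ _ h3, List.getElem_take]

/-- if for every input of length ≥ K the running time of `M` is
less than the input length, then on every input `r` of length ≥ K the running
time is less than `K` and the output equals the output on the length-`K` prefix. -/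
theorem stmt0 (M : TM) (K : ℕ)
    (hhalt : ∀ s : List Bool, M.Halts s)
    (h : ∀ s : List Bool, K ≤ s.length → M.time s < s.length) :
    ∀ r : List Bool, K ≤ r.length →
      M.time r < K ∧ M.output r = M.output (r.take K) := by
  intro r hr
  rcases Nat.eq_zero_or_pos K with hK0 | hKpos
  · exfalso
    have := h [] (by simp [hK0])
    simp at this
  set s := r.take K with hs
  have hsl : s.length = K := by simp [hs]; omega
  have hagree := cfg_agree M r s K (initTape_take_agree r K hr)
  have hts : M.time s < K := by
    have := h s (by omega)
    omega
  have hhs : M.HaltsIn s (M.time s) := Nat.sInf_mem (hhalt s)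
  have hhr : M.HaltsIn r (M.time s) := by
    have := (hagree (M.time s) (by omega)).1
    unfold TM.HaltsIn at hhs ⊢
    rw [this]; exact hhs
  have htr_le : M.time r ≤ M.time s := Nat.sInf_le hhr
  have htr : M.time r = M.time s := by
    refine le_antisymm htr_le ?_
    have hhr' : M.HaltsIn r (M.time r) := Nat.sInf_mem (hhalt r)
    have hqs : M.HaltsIn s (M.time r) := by
      have := (hagree (M.time r) (by omega)).1
      unfold TM.HaltsIn at hhr' ⊢
      rw [← this]; exact hhr'
    exact Nat.sInf_le hqs
  refine ⟨by omega, ?_⟩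
  unfold TM.output
  rw [htr]
  exact (hagree (M.time s) (by omega)).2.2.2 1 (by omega)
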